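/- The Moyal product on polynomial functions on ℝ², defined by f ⋆ g = Σ_{k≥0} (−iℏ/2)^k (1/k!) Σ over indices ω^{i_1 j_1}⋯ω^{i_k j_k} ∂_{i_1}⋯∂_{i_k} f · ∂_{j_1}⋯∂_{j_k} g with ω the standard constant symplectic bivector, is associative as a product on ℝ[x,p][[ℏ]]. -/

import Mathlib

/-! Write `P = Σ ω^{ij} ∂_i ⊗ ∂_j`, so that the `k`-th Moyal term of `f, g` is `(−i/2)^k/k!` times
`μ (P^k (f ⊗ g))`. On `f ⊗ g ⊗ h` let `P_{ab}` act as `P` on the factors `a` and `b`. By the Leibniz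
rule, `P` applied after multiplying the first two factors is `P_{13} + P_{23}`, so
`μ (P^b (μ (P^a (f ⊗ g)) ⊗ h)) = μ (P_{12}^a (P_{13} + P_{23})^b (f ⊗ g ⊗ h))`, and symmetrically
for the other bracketing. The `P_{ab}` have constant coefficients, hence commute, and the binomial
theorem turns both order-`n` terms into
`(−i/2)^n/n! · μ ((P_{12} + P_{13} + P_{23})^n (f ⊗ g ⊗ h))`.
-/

open scoped BigOperators

/-- The standard symplectic bivector on `ℝ²`: `ω^{12} = 1 = −ω^{21}`, `ω^{11} = ω^{22} = 0`. -/
def omegaBV : Fin 2 → Fin 2 → ℂ := fun i j =>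
  if i = 0 ∧ j = 1 then 1 else if i = 1 ∧ j = 0 then -1 else 0

/-- Iterated partial derivative `∂_{v 0} ⋯ ∂_{v (k-1)}` of a polynomial in two variables. -/
noncomputable def applyPD {k : ℕ} (v : Fin k → Fin 2) (f : MvPolynomial (Fin 2) ℂ) :
    MvPolynomial (Fin 2) ℂ :=
  (List.ofFn v).foldl (fun p i => MvPolynomial.pderiv i p) f

/-- The `k`-th order term of the Moyal product:
`(−i/2)^k (1/k!) Σ ω^{i₁j₁}⋯ω^{iₖjₖ} ∂_{i₁}⋯∂_{iₖ}f · ∂_{j₁}⋯∂_{jₖ}g`. -/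
noncomputable def moyalTerm (k : ℕ) (f g : MvPolynomial (Fin 2) ℂ) :
    MvPolynomial (Fin 2) ℂ :=
  ((-Complex.I / 2) ^ k / (k.factorial : ℂ)) •
    ∑ iv : Fin k → Fin 2, ∑ jv : Fin k → Fin 2,
      (∏ t, omegaBV (iv t) (jv t)) • (applyPD iv f * applyPD jv g)

/-- The Moyal product on `ℂ[x,p][[ℏ]]`, `f ⋆ g = Σ_k ℏ^k · moyalTerm k f g`, extended
`ℏ`-bilinearly to formal power series with polynomial coefficients. -/
noncomputable def moyal (F G : PowerSeries (MvPolynomial (Fin 2) ℂ)) :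
    PowerSeries (MvPolynomial (Fin 2) ℂ) :=
  PowerSeries.mk fun n =>
    ∑ t ∈ Finset.Nat.antidiagonalTuple 3 n,
      moyalTerm (t 2) (PowerSeries.coeff (t 0) F) (PowerSeries.coeff (t 1) G)

open MvPolynomial Finset

section PDeriv

variable {σ R : Type*} [CommSemiring R]

theorem pderiv_pderiv_comm [DecidableEq σ] (i j : σ) (f : MvPolynomial σ R) :
    pderiv i (pderiv j f) = pderiv j (pderiv i f) := by
  induction f using MvPolynomial.induction_on with
  | C a => simp
  | add p q hp hq => simp [hp, hq]
  | mul_X p s h =>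
    simp only [pderiv_mul, map_add, pderiv_X, h]
    rcases eq_or_ne s i with rfl | hi <;> rcases eq_or_ne s j with rfl | hj <;>
      simp [*]

theorem commute_pderiv [DecidableEq σ] (i j : σ) :
    Commute (pderiv (R := R) i).toLinearMap (pderiv j).toLinearMap :=
  LinearMap.ext (pderiv_pderiv_comm i j)

theorem pderiv_rename_prodMk_of_ne {ι : Type*} [DecidableEq ι] [DecidableEq σ] {c d : ι}
    (hcd : c ≠ d) (i : σ) (p : MvPolynomial σ R) :
    pderiv (c, i) (rename (Prod.mk d) p) = 0 := by
  refine pderiv_eq_zero_of_notMem_vars fun hmem => hcd ?_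
  obtain ⟨j, -, hj⟩ := mem_vars_rename _ p hmem
  exact (Prod.mk.inj hj).1.symm

end PDeriv

section BidiffPow

variable {σ R : Type*} [CommSemiring R] [Fintype σ] (ω : σ → σ → R)

noncomputable def bidiffPow :
    ℕ → MvPolynomial σ R →ₗ[R] MvPolynomial σ R →ₗ[R] MvPolynomial σ R
  | 0 => LinearMap.mul R _
  | k + 1 => ∑ i, ∑ j, ω i j •
      (bidiffPow k).compl₁₂ (pderiv i).toLinearMap (pderiv j).toLinearMap

theorem bidiffPow_zero_apply (f g : MvPolynomial σ R) : bidiffPow ω 0 f g = f * g := rfl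

theorem bidiffPow_succ_apply (k : ℕ) (f g : MvPolynomial σ R) :
    bidiffPow ω (k + 1) f g = ∑ i, ∑ j, ω i j • bidiffPow ω k (pderiv i f) (pderiv j g) := by
  simp [bidiffPow, LinearMap.sum_apply]

theorem pderiv_bidiffPow [DecidableEq σ] (l : σ) (k : ℕ) (f g : MvPolynomial σ R) :
    pderiv l (bidiffPow ω k f g) =
      bidiffPow ω k (pderiv l f) g + bidiffPow ω k f (pderiv l g) := by
  induction k generalizing f g with
  | zero => simp only [bidiffPow_zero_apply, pderiv_mul]
  | succ k ih =>
    simp only [bidiffPow_succ_apply, map_sum, Derivation.map_smul, ih, smul_add,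
      sum_add_distrib, pderiv_pderiv_comm l]

theorem bidiffPow_eq_sum (k : ℕ) (f g : MvPolynomial σ R) :
    bidiffPow ω k f g = ∑ iv : Fin k → σ, ∑ jv : Fin k → σ, (∏ t, ω (iv t) (jv t)) •
      ((List.ofFn iv).foldl (fun p i => pderiv i p) f *
        (List.ofFn jv).foldl (fun p i => pderiv i p) g) := by
  induction k generalizing f g with
  | zero => simp [bidiffPow_zero_apply]
  | succ k ih =>
    have hsplit : ∀ (F : (Fin (k + 1) → σ) → MvPolynomial σ R),
        ∑ v, F v = ∑ i, ∑ v : Fin k → σ, F (Fin.cons i v) := fun F => by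
      rw [← (Fin.consEquiv fun _ => σ).sum_comp, Fintype.sum_prod_type]; rfl
    simp only [bidiffPow_succ_apply, ih, hsplit, Fin.prod_univ_succ, Fin.cons_zero,
      Fin.cons_succ, List.ofFn_succ, List.foldl_cons, smul_sum, mul_smul]
    exact sum_congr rfl fun _ _ => sum_comm

end BidiffPow

section TripleProduct

variable {σ R : Type*} [CommSemiring R]

-- `f ⊗ g ⊗ h`, realised in three copies of the variables; `rename Prod.snd` is the product map `μ`.
noncomputable def tensor3 (f g h : MvPolynomial σ R) : MvPolynomial (Fin 3 × σ) R :=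
  rename (Prod.mk 0) f * rename (Prod.mk 1) g * rename (Prod.mk 2) h

theorem rename_snd_tensor3 (f g h : MvPolynomial σ R) :
    rename Prod.snd (tensor3 f g h) = f * g * h := by
  simp [tensor3, rename_rename, Prod.snd_comp_mk]

variable [DecidableEq σ]

theorem pderiv_zero_tensor3 (i : σ) (f g h : MvPolynomial σ R) :
    pderiv (0, i) (tensor3 f g h) = tensor3 (pderiv i f) g h := by
  simp [tensor3, pderiv_rename (Prod.mk_right_injective _), pderiv_rename_prodMk_of_ne]
  ring

theorem pderiv_one_tensor3 (i : σ) (f g h : MvPolynomial σ R) :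
    pderiv (1, i) (tensor3 f g h) = tensor3 f (pderiv i g) h := by
  simp [tensor3, pderiv_rename (Prod.mk_right_injective _), pderiv_rename_prodMk_of_ne]
  ring

theorem pderiv_two_tensor3 (i : σ) (f g h : MvPolynomial σ R) :
    pderiv (2, i) (tensor3 f g h) = tensor3 f g (pderiv i h) := by
  simp [tensor3, pderiv_rename (Prod.mk_right_injective _), pderiv_rename_prodMk_of_ne]

variable [Fintype σ] (ω : σ → σ → R)

noncomputable def pairOp {ι : Type*} [DecidableEq ι] (c d : ι) :
    Module.End R (MvPolynomial (ι × σ) R) :=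
  ∑ i, ∑ j, ω i j • ((pderiv (c, i)).toLinearMap * (pderiv (d, j)).toLinearMap)

theorem commute_pairOp {ι : Type*} [DecidableEq ι] (c d c' d' : ι) :
    Commute (pairOp ω c d) (pairOp ω c' d') := by
  have h (a b : ι × σ) := commute_pderiv (R := R) a b
  exact .sum_left _ _ _ fun _ _ => .sum_left _ _ _ fun _ _ =>
    .sum_right _ _ _ fun _ _ => .sum_right _ _ _ fun _ _ =>
      (((h _ _).mul_right (h _ _)).mul_left ((h _ _).mul_right (h _ _))).smul_left _ |>.smul_right _

theorem pairOp_zero_one_tensor3 (f g h : MvPolynomial σ R) :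
    pairOp ω 0 1 (tensor3 f g h) = ∑ i, ∑ j, ω i j • tensor3 (pderiv i f) (pderiv j g) h := by
  simp [pairOp, LinearMap.sum_apply, pderiv_zero_tensor3, pderiv_one_tensor3]

theorem pairOp_zero_two_tensor3 (f g h : MvPolynomial σ R) :
    pairOp ω 0 2 (tensor3 f g h) = ∑ i, ∑ j, ω i j • tensor3 (pderiv i f) g (pderiv j h) := by
  simp [pairOp, LinearMap.sum_apply, pderiv_zero_tensor3, pderiv_two_tensor3]

theorem pairOp_one_two_tensor3 (f g h : MvPolynomial σ R) :
    pairOp ω 1 2 (tensor3 f g h) = ∑ i, ∑ j, ω i j • tensor3 f (pderiv i g) (pderiv j h) := by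
  simp [pairOp, LinearMap.sum_apply, pderiv_one_tensor3, pderiv_two_tensor3]

theorem rename_snd_pairOp_zero_one_pow_tensor3 (a : ℕ) (f g h : MvPolynomial σ R) :
    rename Prod.snd ((pairOp ω 0 1 ^ a) (tensor3 f g h)) = bidiffPow ω a f g * h := by
  induction a generalizing f g with
  | zero => simp [rename_snd_tensor3, bidiffPow_zero_apply]
  | succ a ih =>
    simp only [pow_succ, Module.End.mul_apply, pairOp_zero_one_tensor3, map_sum, map_smul, ih,
      bidiffPow_succ_apply, sum_mul, smul_mul_assoc]

theorem rename_snd_pairOp_one_two_pow_tensor3 (b : ℕ) (f g h : MvPolynomial σ R) :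
    rename Prod.snd ((pairOp ω 1 2 ^ b) (tensor3 f g h)) = f * bidiffPow ω b g h := by
  induction b generalizing g h with
  | zero => simp [rename_snd_tensor3, bidiffPow_zero_apply, mul_assoc]
  | succ b ih =>
    simp only [pow_succ, Module.End.mul_apply, pairOp_one_two_tensor3, map_sum, map_smul, ih,
      bidiffPow_succ_apply, mul_sum, mul_smul_comm]

theorem bidiffPow_bidiffPow_left (a b : ℕ) (f g h : MvPolynomial σ R) :
    bidiffPow ω b (bidiffPow ω a f g) h = rename Prod.snd
      ((pairOp ω 0 1 ^ a * (pairOp ω 0 2 + pairOp ω 1 2) ^ b : Module.End R _)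
        (tensor3 f g h)) := by
  induction b generalizing f g h with
  | zero => simp [rename_snd_pairOp_zero_one_pow_tensor3, bidiffPow_zero_apply]
  | succ b ih =>
    simp only [Module.End.mul_apply] at ih
    simp only [pow_succ, ← mul_assoc, Module.End.mul_apply, LinearMap.add_apply,
      pairOp_zero_two_tensor3, pairOp_one_two_tensor3, map_add, map_sum, map_smul, ← ih,
      bidiffPow_succ_apply, pderiv_bidiffPow, smul_add, sum_add_distrib]

theorem bidiffPow_bidiffPow_right (a b : ℕ) (f g h : MvPolynomial σ R) :
    bidiffPow ω a f (bidiffPow ω b g h) = rename Prod.snd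
      ((pairOp ω 1 2 ^ b * (pairOp ω 0 1 + pairOp ω 0 2) ^ a : Module.End R _)
        (tensor3 f g h)) := by
  induction a generalizing f g h with
  | zero => simp [rename_snd_pairOp_one_two_pow_tensor3, bidiffPow_zero_apply]
  | succ a ih =>
    simp only [Module.End.mul_apply] at ih
    simp only [pow_succ, ← mul_assoc, Module.End.mul_apply, LinearMap.add_apply,
      pairOp_zero_one_tensor3, pairOp_zero_two_tensor3, map_add, map_sum, map_smul, ← ih,
      bidiffPow_succ_apply, pderiv_bidiffPow, smul_add, sum_add_distrib]

end TripleProduct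

theorem Commute.div_factorial_smul_add_pow {K A : Type*} [Field K] [CharZero K] [Ring A]
    [Algebra K A] {X Y : A} (hXY : Commute X Y) (x : K) (n : ℕ) :
    (x ^ n / n.factorial) • (X + Y) ^ n =
      ∑ p ∈ antidiagonal n, (x ^ p.1 / p.1.factorial * (x ^ p.2 / p.2.factorial)) •
        (X ^ p.1 * Y ^ p.2) := by
  rw [hXY.add_pow', smul_sum]
  refine sum_congr rfl fun ⟨a, b⟩ hp => ?_
  obtain rfl := HasAntidiagonal.mem_antidiagonal.mp hp
  rw [← Nat.cast_smul_eq_nsmul K, smul_smul, Nat.cast_add_choose, pow_add]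
  have : ((a + b).factorial : K) ≠ 0 := Nat.cast_ne_zero.mpr (a + b).factorial_ne_zero
  congr 1
  field_simp

theorem sum_antidiagonalTuple_three {M : Type*} [AddCommMonoid M] (n : ℕ)
    (φ : (Fin 3 → ℕ) → M) :
    ∑ t ∈ Nat.antidiagonalTuple 3 n, φ t =
      ∑ p ∈ antidiagonal n, ∑ q ∈ antidiagonal p.2, φ ![p.1, q.1, q.2] := by
  rw [sum_sigma']
  refine sum_nbij' (fun t => ⟨(t 0, t 1 + t 2), (t 1, t 2)⟩)
    (fun x => ![x.1.1, x.2.1, x.2.2]) ?_ ?_ ?_ ?_ ?_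
  · intro t ht
    simp_all [Nat.mem_antidiagonalTuple, Fin.sum_univ_three, add_assoc]
  · rintro ⟨⟨a, b⟩, c, d⟩ h
    simp_all [Nat.mem_antidiagonalTuple, Fin.sum_univ_three]
    omega
  · intro t _
    ext i; fin_cases i <;> rfl
  · rintro ⟨⟨a, b⟩, c, d⟩ h
    simp_all
  · intro t _
    congr; ext i; fin_cases i <;> rfl

section Moyal

open PowerSeries

theorem moyalTerm_eq_smul_bidiffPow (k : ℕ) (f g : MvPolynomial (Fin 2) ℂ) :
    moyalTerm k f g = ((-Complex.I / 2) ^ k / k.factorial) • bidiffPow omegaBV k f g := by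
  rw [moyalTerm, bidiffPow_eq_sum]
  rfl

theorem coeff_moyal_C_right (F : PowerSeries (MvPolynomial (Fin 2) ℂ))
    (h : MvPolynomial (Fin 2) ℂ) (n : ℕ) :
    coeff n (moyal F (C h)) = ∑ p ∈ antidiagonal n, moyalTerm p.2 (coeff p.1 F) h := by
  rw [moyal, coeff_mk, sum_antidiagonalTuple_three]
  refine sum_congr rfl fun p _ => (sum_eq_single (0, p.2) ?_ (by simp)).trans (by simp)
  rintro ⟨_ | q₁, q₂⟩ hq hne
  · simp_all
  · simp [moyalTerm_eq_smul_bidiffPow]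

theorem coeff_moyal_C_left (f : MvPolynomial (Fin 2) ℂ)
    (G : PowerSeries (MvPolynomial (Fin 2) ℂ)) (n : ℕ) :
    coeff n (moyal (C f) G) = ∑ q ∈ antidiagonal n, moyalTerm q.1 f (coeff q.2 G) := by
  rw [← Nat.sum_antidiagonal_swap, moyal, coeff_mk, sum_antidiagonalTuple_three]
  refine (sum_eq_single (0, n) ?_ (by simp)).trans (by simp)
  rintro ⟨_ | p₁, p₂⟩ hp hne
  · simp_all
  · simp [moyalTerm_eq_smul_bidiffPow]

theorem moyal_C_C (f g : MvPolynomial (Fin 2) ℂ) :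
    moyal (C f) (C g) = mk fun k => moyalTerm k f g := by
  ext n : 1
  rw [coeff_moyal_C_left, coeff_mk]
  refine (sum_eq_single (n, 0) ?_ (by simp)).trans (by simp)
  rintro ⟨q₁, _ | q₂⟩ hq hne
  · simp_all
  · simp [moyalTerm_eq_smul_bidiffPow]

theorem coeff_moyal_moyal_C_left (f g h : MvPolynomial (Fin 2) ℂ) (n : ℕ) :
    coeff n (moyal (moyal (C f) (C g)) (C h)) = rename Prod.snd
      ((((-Complex.I / 2) ^ n / n.factorial) •
        (pairOp omegaBV 0 1 + (pairOp omegaBV 0 2 + pairOp omegaBV 1 2)) ^ n :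
          Module.End ℂ _) (tensor3 f g h)) := by
  have hcomm : Commute (pairOp omegaBV (0 : Fin 3) 1) (pairOp omegaBV 0 2 + pairOp omegaBV 1 2) :=
    (commute_pairOp ..).add_right (commute_pairOp ..)
  rw [coeff_moyal_C_right, moyal_C_C, hcomm.div_factorial_smul_add_pow, LinearMap.sum_apply,
    map_sum]
  refine sum_congr rfl fun p _ => ?_
  rw [coeff_mk, moyalTerm_eq_smul_bidiffPow, moyalTerm_eq_smul_bidiffPow, map_smul,
    LinearMap.smul_apply, smul_smul, bidiffPow_bidiffPow_left, LinearMap.smul_apply, map_smul,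
    mul_comm]

theorem coeff_moyal_C_moyal_right (f g h : MvPolynomial (Fin 2) ℂ) (n : ℕ) :
    coeff n (moyal (C f) (moyal (C g) (C h))) = rename Prod.snd
      ((((-Complex.I / 2) ^ n / n.factorial) •
        (pairOp omegaBV 0 1 + pairOp omegaBV 0 2 + pairOp omegaBV 1 2) ^ n :
          Module.End ℂ _) (tensor3 f g h)) := by
  have hcomm : Commute (pairOp omegaBV (0 : Fin 3) 1 + pairOp omegaBV 0 2) (pairOp omegaBV 1 2) :=
    (commute_pairOp ..).add_left (commute_pairOp ..)
  rw [coeff_moyal_C_left, moyal_C_C, hcomm.div_factorial_smul_add_pow, LinearMap.sum_apply,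
    map_sum]
  refine sum_congr rfl fun p _ => ?_
  rw [coeff_mk, moyalTerm_eq_smul_bidiffPow, moyalTerm_eq_smul_bidiffPow, map_smul, smul_smul,
    bidiffPow_bidiffPow_right, ← (hcomm.pow_pow _ _).eq, LinearMap.smul_apply, map_smul]

end Moyal

/-- The Moyal product on polynomial functions on `ℝ²` is associative as a product on
`ℂ[x,p][[ℏ]]`. -/
theorem moyal_assoc (f g h : MvPolynomial (Fin 2) ℂ) :
    moyal (moyal (PowerSeries.C f) (PowerSeries.C g)) (PowerSeries.C h) =
      moyal (PowerSeries.C f) (moyal (PowerSeries.C g) (PowerSeries.C h)) := by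
  ext n : 1
  rw [coeff_moyal_moyal_C_left, coeff_moyal_C_moyal_right, add_assoc]
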